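/- arXiv:1003.4770 — 8 statements merged into one kernel-verified Lean document; each statement's English description precedes it below -/
import Mathlib

section
/- The commutator algebra of a Hom-associative algebra is a Hom-Lie algebra: if (V, μ, α) satisfies μ(μ(x,y), α(z)) = μ(α(x), μ(y,z)) for all x,y,z, then the bracket [x,y] := μ(x,y) − μ(y,x) is skew-symmetric and satisfies the Hom-Jacobi identity [[x,y],α(z)] + [[y,z],α(x)] + [[z,x],α(y)] = 0. -/
section HomAssociative

variable {R V : Type*} [CommSemiring R] [AddCommGroup V] [Module R V]

/-- Expanding the bracket gives twelve terms `±μ(μ(a,b),α c)` and `±μ(α a,μ(b,c))`, and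
Hom-associativity pairs each term of the first kind with one of the second kind of opposite sign. -/
theorem homJacobi_commutator_of_homAssoc (μ : V →ₗ[R] V →ₗ[R] V) (α : V → V)
    (hassoc : ∀ x y z : V, μ (μ x y) (α z) = μ (α x) (μ y z)) (x y z : V) :
    let br : V → V → V := fun a b => μ a b - μ b a
    br (br x y) (α z) + br (br y z) (α x) + br (br z x) (α y) = 0 := by
  simp only [map_sub, LinearMap.sub_apply]
  rw [hassoc x y z, hassoc y x z, hassoc y z x, hassoc z y x, hassoc z x y, hassoc x z y]
  abel

end HomAssociative

theorem stmt_0_general {K V : Type*} [Field K] [AddCommGroup V] [Module K V]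
    (μ : V →ₗ[K] V →ₗ[K] V) (α : V →ₗ[K] V)
    (hassoc : ∀ x y z : V, μ (μ x y) (α z) = μ (α x) (μ y z)) :
    (∀ x y : V, μ x y - μ y x = -(μ y x - μ x y)) ∧
    (∀ x y z : V,
      let br : V → V → V := fun a b => μ a b - μ b a
      br (br x y) (α z) + br (br y z) (α x) + br (br z x) (α y) = 0) :=
  ⟨fun x y => (neg_sub _ _).symm, homJacobi_commutator_of_homAssoc μ α hassoc⟩

/-- The commutator algebra of a Hom-associative algebra is a Hom-Lie algebra. -/
theorem stmt_0 {K V : Type*} [Field K] [CharZero K] [AddCommGroup V] [Module K V]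
    (μ : V →ₗ[K] V →ₗ[K] V) (α : V →ₗ[K] V)
    (hassoc : ∀ x y z : V, μ (μ x y) (α z) = μ (α x) (μ y z)) :
    (∀ x y : V, μ x y - μ y x = -(μ y x - μ x y)) ∧
    (∀ x y z : V,
      let br : V → V → V := fun a b => μ a b - μ b a
      br (br x y) (α z) + br (br y z) (α x) + br (br z x) (α y) = 0) :=
  stmt_0_general μ α hassoc
end

section
/- The commutator-Hom-associator algebra of a non-Hom-associative algebra is a Hom-Akivis algebra: given (A, μ, α) with μ bilinear and α linear, the operations [x,y] := μ(x,y) − μ(y,x) and [x,y,z] := μ(μ(x,y), α(z)) − μ(α(x), μ(y,z)) satisfy the Hom-Akivis identity: the cyclic sum over x,y,z of [[x,y], α(z)] equals the cyclic sum of [x,y,z] minus the cyclic sum of [y,x,z]. -/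
theorem stmt_4_general {K A : Type*} [Field K] [AddCommGroup A] [Module K A]
    (μ : A →ₗ[K] A →ₗ[K] A) (α : A →ₗ[K] A) :
    ∀ x y z : A,
      let br : A → A → A := fun a b => μ a b - μ b a
      let as : A → A → A → A := fun a b c => μ (μ a b) (α c) - μ (α a) (μ b c)
      br (br x y) (α z) + br (br y z) (α x) + br (br z x) (α y)
        = (as x y z + as y z x + as z x y) - (as y x z + as z y x + as x z y) := by
  intro x y z br as
  simp only [br, as, map_sub, LinearMap.sub_apply]
  abel

/-- The commutator-Hom-associator algebra of a non-Hom-associative algebra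
satisfies the Hom-Akivis identity. -/
theorem stmt_4 {K A : Type*} [Field K] [CharZero K] [AddCommGroup A] [Module K A]
    (μ : A →ₗ[K] A →ₗ[K] A) (α : A →ₗ[K] A) :
    ∀ x y z : A,
      let br : A → A → A := fun a b => μ a b - μ b a
      let as : A → A → A → A := fun a b c => μ (μ a b) (α c) - μ (α a) (μ b c)
      br (br x y) (α z) + br (br y z) (α x) + br (br z x) (α y)
        = (as x y z + as y z x + as z x y) - (as y x z + as z y x + as x z y) :=
  stmt_4_general μ α
end

section
/- Let (A, [−,−], [−,−,−], α) be a Hom-Akivis algebra and β : A → A a self-morphism of it commuting with nothing assumed. Define [x,y]_β := β([x,y]) and [x,y,z]_β := β²([x,y,z]). Then (A, [−,−]_β, [−,−,−]_β, β∘α) is a Hom-Akivis algebra. -/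
theorem stmt_6_general {K A : Type*} [Field K] [AddCommGroup A] [Module K A]
    (br : A →ₗ[K] A →ₗ[K] A) (tr : A →ₗ[K] A →ₗ[K] A →ₗ[K] A)
    (α : A →ₗ[K] A) (β : A →ₗ[K] A)
    (hskew : ∀ x y : A, br x y = -br y x)
    (hakivis : ∀ x y z : A,
      br (br x y) (α z) + br (br y z) (α x) + br (br z x) (α y)
        = (tr x y z + tr y z x + tr z x y) - (tr y x z + tr z y x + tr x z y))
    (hβbr : ∀ x y : A, β (br x y) = br (β x) (β y)) :
    (∀ x y : A, β (br x y) = -β (br y x)) ∧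
    (∀ x y z : A,
      let brβ : A → A → A := fun a b => β (br a b)
      let trβ : A → A → A → A := fun a b c => β (β (tr a b c))
      brβ (brβ x y) (β (α z)) + brβ (brβ y z) (β (α x)) + brβ (brβ z x) (β (α y))
        = (trβ x y z + trβ y z x + trβ z x y)
          - (trβ y x z + trβ z y x + trβ x z y)) := by
  refine ⟨fun x y => by rw [hskew x y, map_neg], fun x y z => ?_⟩
  intro brβ trβ
  have twisted_jacobiator : ∀ u v w : A,
      brβ (brβ u v) (β (α w)) = β (β (br (br u v) (α w))) := fun u v w => by
    simp only [brβ, hβbr]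
  simp only [twisted_jacobiator, trβ, ← map_add, ← map_sub, hakivis]

/-- Twisting a Hom-Akivis algebra along a self-morphism β yields a
Hom-Akivis algebra with twist β ∘ α. -/
theorem stmt_6 {K A : Type*} [Field K] [CharZero K] [AddCommGroup A] [Module K A]
    (br : A →ₗ[K] A →ₗ[K] A) (tr : A →ₗ[K] A →ₗ[K] A →ₗ[K] A)
    (α : A →ₗ[K] A) (β : A →ₗ[K] A)
    (hskew : ∀ x y : A, br x y = -br y x)
    (hakivis : ∀ x y z : A,
      br (br x y) (α z) + br (br y z) (α x) + br (br z x) (α y)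
        = (tr x y z + tr y z x + tr z x y) - (tr y x z + tr z y x + tr x z y))
    (hβbr : ∀ x y : A, β (br x y) = br (β x) (β y))
    (hβtr : ∀ x y z : A, β (tr x y z) = tr (β x) (β y) (β z)) :
    (∀ x y : A, β (br x y) = -β (br y x)) ∧
    (∀ x y z : A,
      let brβ : A → A → A := fun a b => β (br a b)
      let trβ : A → A → A → A := fun a b c => β (β (tr a b c))
      brβ (brβ x y) (β (α z)) + brβ (brβ y z) (β (α x)) + brβ (brβ z x) (β (α y))
        = (trβ x y z + trβ y z x + trβ z x y)
          - (trβ y x z + trβ z y x + trβ x z y)) :=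
  stmt_6_general br tr α β hskew hakivis hβbr
end

section
/- Let (A, [−,−], [−,−,−], α) be a multiplicative Hom-Akivis algebra and β a self-morphism of (A, [−,−], [−,−,−], α) commuting with α. Then the twisted Hom-Akivis algebra (A, [−,−]_β, [−,−,−]_β, β∘α), where [x,y]_β := β([x,y]) and [x,y,z]_β := β²([x,y,z]), is multiplicative: β∘α preserves both [−,−]_β and [−,−,−]_β. -/
section Twist

variable {A : Type*} {γ β : A → A}

theorem map_twist_binary {μ : A → A → A} (hγ : ∀ x y, γ (μ x y) = μ (γ x) (γ y))
    (hcomm : ∀ x, γ (β x) = β (γ x)) (x y : A) :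
    γ (β (μ x y)) = β (μ (γ x) (γ y)) := by
  rw [hcomm, hγ]

theorem map_twist_ternary {μ : A → A → A → A}
    (hγ : ∀ x y z, γ (μ x y z) = μ (γ x) (γ y) (γ z))
    (hcomm : ∀ x, γ (β x) = β (γ x)) (x y z : A) :
    γ (β (β (μ x y z))) = β (β (μ (γ x) (γ y) (γ z))) := by
  rw [hcomm, hcomm, hγ]

end Twist

theorem stmt_7_general {K A : Type*} [Field K] [AddCommGroup A] [Module K A]
    (br : A →ₗ[K] A →ₗ[K] A) (tr : A →ₗ[K] A →ₗ[K] A →ₗ[K] A)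
    (α : A →ₗ[K] A) (β : A →ₗ[K] A)
    (hαbr : ∀ x y : A, α (br x y) = br (α x) (α y))
    (hαtr : ∀ x y z : A, α (tr x y z) = tr (α x) (α y) (α z))
    (hβbr : ∀ x y : A, β (br x y) = br (β x) (β y))
    (hβtr : ∀ x y z : A, β (tr x y z) = tr (β x) (β y) (β z))
    (hcomm : ∀ x : A, β (α x) = α (β x)) :
    ∀ x y z : A,
      let γ : A → A := fun a => β (α a)
      let brβ : A → A → A := fun a b => β (br a b)
      let trβ : A → A → A → A := fun a b c => β (β (tr a b c))
      γ (brβ x y) = brβ (γ x) (γ y) ∧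
      γ (trβ x y z) = trβ (γ x) (γ y) (γ z) := by
  intro x y z
  have hγbr : ∀ a b, β (α (br a b)) = br (β (α a)) (β (α b)) := fun a b => by
    rw [hαbr, hβbr]
  have hγtr : ∀ a b c, β (α (tr a b c)) = tr (β (α a)) (β (α b)) (β (α c)) :=
    fun a b c => by rw [hαtr, hβtr]
  have hγβ : ∀ a, β (α (β a)) = β (β (α a)) := fun a => by rw [hcomm a]
  exact ⟨map_twist_binary (γ := fun a => β (α a)) (μ := fun a b => br a b) hγbr hγβ x y,
    map_twist_ternary (γ := fun a => β (α a)) (μ := fun a b c => tr a b c) hγtr hγβ x y z⟩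

/-- Twisting a multiplicative Hom-Akivis algebra along a self-morphism β
commuting with α yields a multiplicative Hom-Akivis algebra. -/
theorem stmt_7 {K A : Type*} [Field K] [CharZero K] [AddCommGroup A] [Module K A]
    (br : A →ₗ[K] A →ₗ[K] A) (tr : A →ₗ[K] A →ₗ[K] A →ₗ[K] A)
    (α : A →ₗ[K] A) (β : A →ₗ[K] A)
    (hskew : ∀ x y : A, br x y = -br y x)
    (hakivis : ∀ x y z : A,
      br (br x y) (α z) + br (br y z) (α x) + br (br z x) (α y)
        = (tr x y z + tr y z x + tr z x y) - (tr y x z + tr z y x + tr x z y))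
    (hαbr : ∀ x y : A, α (br x y) = br (α x) (α y))
    (hαtr : ∀ x y z : A, α (tr x y z) = tr (α x) (α y) (α z))
    (hβbr : ∀ x y : A, β (br x y) = br (β x) (β y))
    (hβtr : ∀ x y z : A, β (tr x y z) = tr (β x) (β y) (β z))
    (hcomm : ∀ x : A, β (α x) = α (β x)) :
    ∀ x y z : A,
      let γ : A → A := fun a => β (α a)
      let brβ : A → A → A := fun a b => β (br a b)
      let trβ : A → A → A → A := fun a b c => β (β (tr a b c))
      γ (brβ x y) = brβ (γ x) (γ y) ∧
      γ (trβ x y z) = trβ (γ x) (γ y) (γ z) :=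
  stmt_7_general br tr α β hαbr hαtr hβbr hβtr hcomm
end

section
/- Let (A, [−,−], [−,−,−]) be an Akivis algebra and β an endomorphism of it. Then (A, [−,−]_β, [−,−,−]_β, β), with [x,y]_β := β([x,y]) and [x,y,z]_β := β²([x,y,z]), is a multiplicative Hom-Akivis algebra. -/
/-! Since β is multiplicative, `[[x,y]_β, β z]_β = β²[[x,y],z]`, so the Hom-Akivis identity of the
twist is just the image under β² of the Akivis identity of `A`. -/

theorem akivis_twist_identity {R A : Type*} [CommRing R] [AddCommGroup A] [Module R A]
    (br : A →ₗ[R] A →ₗ[R] A) (tr : A →ₗ[R] A →ₗ[R] A →ₗ[R] A) (β : A →ₗ[R] A)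
    (hakivis : ∀ x y z : A,
      br (br x y) z + br (br y z) x + br (br z x) y
        = (tr x y z + tr y z x + tr z x y) - (tr y x z + tr z y x + tr x z y))
    (hβbr : ∀ x y : A, β (br x y) = br (β x) (β y)) (x y z : A) :
    β (br (β (br x y)) (β z)) + β (br (β (br y z)) (β x)) + β (br (β (br z x)) (β y))
      = (β (β (tr x y z)) + β (β (tr y z x)) + β (β (tr z x y)))
        - (β (β (tr y x z)) + β (β (tr z y x)) + β (β (tr x z y))) := by
  have twist_twist : ∀ u v : A, β (br (β u) (β v)) = β (β (br u v)) := fun u v => by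
    rw [hβbr u v]
  simp only [twist_twist]
  simpa only [map_add, map_sub] using congrArg (fun v => β (β v)) (hakivis x y z)

theorem stmt_8_general {K A : Type*} [Field K] [AddCommGroup A] [Module K A]
    (br : A →ₗ[K] A →ₗ[K] A) (tr : A →ₗ[K] A →ₗ[K] A →ₗ[K] A)
    (β : A →ₗ[K] A)
    (hskew : ∀ x y : A, br x y = -br y x)
    (hakivis : ∀ x y z : A,
      br (br x y) z + br (br y z) x + br (br z x) y
        = (tr x y z + tr y z x + tr z x y) - (tr y x z + tr z y x + tr x z y))
    (hβbr : ∀ x y : A, β (br x y) = br (β x) (β y))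
    (hβtr : ∀ x y z : A, β (tr x y z) = tr (β x) (β y) (β z)) :
    (∀ x y : A, β (br x y) = -β (br y x)) ∧
    (∀ x y z : A,
      let brβ : A → A → A := fun a b => β (br a b)
      let trβ : A → A → A → A := fun a b c => β (β (tr a b c))
      (brβ (brβ x y) (β z) + brβ (brβ y z) (β x) + brβ (brβ z x) (β y)
        = (trβ x y z + trβ y z x + trβ z x y)
          - (trβ y x z + trβ z y x + trβ x z y)) ∧
      β (brβ x y) = brβ (β x) (β y) ∧
      β (trβ x y z) = trβ (β x) (β y) (β z)) :=
  ⟨fun x y => by rw [hskew x y, map_neg],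
    fun x y z => ⟨akivis_twist_identity br tr β hakivis hβbr x y z,
      congrArg β (hβbr x y), congrArg (fun v => β (β v)) (hβtr x y z)⟩⟩

/-- Twisting an Akivis algebra along an endomorphism β yields a multiplicative
Hom-Akivis algebra with twist β. -/
theorem stmt_8 {K A : Type*} [Field K] [CharZero K] [AddCommGroup A] [Module K A]
    (br : A →ₗ[K] A →ₗ[K] A) (tr : A →ₗ[K] A →ₗ[K] A →ₗ[K] A)
    (β : A →ₗ[K] A)
    (hskew : ∀ x y : A, br x y = -br y x)
    (hakivis : ∀ x y z : A,
      br (br x y) z + br (br y z) x + br (br z x) y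
        = (tr x y z + tr y z x + tr z x y) - (tr y x z + tr z y x + tr x z y))
    (hβbr : ∀ x y : A, β (br x y) = br (β x) (β y))
    (hβtr : ∀ x y z : A, β (tr x y z) = tr (β x) (β y) (β z)) :
    (∀ x y : A, β (br x y) = -β (br y x)) ∧
    (∀ x y z : A,
      let brβ : A → A → A := fun a b => β (br a b)
      let trβ : A → A → A → A := fun a b c => β (β (tr a b c))
      (brβ (brβ x y) (β z) + brβ (brβ y z) (β x) + brβ (brβ z x) (β y)
        = (trβ x y z + trβ y z x + trβ z x y)
          - (trβ y x z + trβ z y x + trβ x z y)) ∧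
      β (brβ x y) = brβ (β x) (β y) ∧
      β (trβ x y z) = trβ (β x) (β y) (β z)) :=
  stmt_8_general br tr β hskew hakivis hβbr hβtr
end

section
/- Let (A, [−,−], [−,−,−], α) be a Hom-flexible Hom-Akivis algebra (i.e. [x,y,x] = 0 for all x,y). Then (A, [−,−], α) is a Hom-Lie algebra if and only if Σ_cyc [x,y,z] = 0 for all x,y,z, where Σ_cyc is the cyclic sum over x,y,z. -/
/-!
Polarizing flexibility `[x, y, x] = 0` at `x + z` shows that the ternary bracket is
antisymmetric in its outer arguments, `[z, y, x] = -[x, y, z]`. Hence the anticyclic sum in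
the Hom-Akivis identity is minus the cyclic one, so the Hom-Jacobiator equals twice the
cyclic sum of `[-, -, -]`, and `2` is invertible in characteristic zero.
-/

namespace LinearMap

variable {R M N : Type*} [CommSemiring R] [AddCommMonoid M] [AddCommGroup N] [Module R M]
  [Module R N] {tr : M →ₗ[R] M →ₗ[R] M →ₗ[R] N}

theorem apply_swap_eq_neg_of_flexible (hflex : ∀ x y, tr x y x = 0) (x y z : M) :
    tr z y x = -tr x y z := by
  have h := hflex (x + z) y
  simp only [map_add, add_apply, hflex, zero_add, add_zero] at h
  exact eq_neg_of_add_eq_zero_left h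

theorem cyclic_sub_anticyclic_eq_two_nsmul_of_flexible (hflex : ∀ x y, tr x y x = 0) (x y z : M) :
    (tr x y z + tr y z x + tr z x y) - (tr y x z + tr z y x + tr x z y)
      = 2 • (tr x y z + tr y z x + tr z x y) := by
  rw [apply_swap_eq_neg_of_flexible hflex z x y, apply_swap_eq_neg_of_flexible hflex x y z,
    apply_swap_eq_neg_of_flexible hflex y z x, two_nsmul]
  abel

end LinearMap

theorem stmt_12_general {K A : Type*} [Field K] [CharZero K] [AddCommGroup A] [Module K A]
    (br : A →ₗ[K] A →ₗ[K] A) (tr : A →ₗ[K] A →ₗ[K] A →ₗ[K] A)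
    (α : A →ₗ[K] A)
    (hakivis : ∀ x y z : A,
      br (br x y) (α z) + br (br y z) (α x) + br (br z x) (α y)
        = (tr x y z + tr y z x + tr z x y) - (tr y x z + tr z y x + tr x z y))
    (hflex : ∀ x y : A, tr x y x = 0) :
    (∀ x y z : A, br (br x y) (α z) + br (br y z) (α x) + br (br z x) (α y) = 0)
      ↔ (∀ x y z : A, tr x y z + tr y z x + tr z x y = 0) := by
  have two_smul_eq_zero_iff (v : A) : (2 : ℕ) • v = 0 ↔ v = 0 := by
    rw [← Nat.cast_smul_eq_nsmul K, Nat.cast_ofNat, smul_eq_zero_iff_right two_ne_zero]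
  simp only [hakivis, LinearMap.cyclic_sub_anticyclic_eq_two_nsmul_of_flexible hflex, two_smul_eq_zero_iff]

/-- A Hom-flexible Hom-Akivis algebra is a Hom-Lie algebra iff the cyclic sum
of the ternary bracket vanishes. -/
theorem stmt_12 {K A : Type*} [Field K] [CharZero K] [AddCommGroup A] [Module K A]
    (br : A →ₗ[K] A →ₗ[K] A) (tr : A →ₗ[K] A →ₗ[K] A →ₗ[K] A)
    (α : A →ₗ[K] A)
    (hskew : ∀ x y : A, br x y = -br y x)
    (hakivis : ∀ x y z : A,
      br (br x y) (α z) + br (br y z) (α x) + br (br z x) (α y)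
        = (tr x y z + tr y z x + tr z x y) - (tr y x z + tr z y x + tr x z y))
    (hflex : ∀ x y : A, tr x y x = 0) :
    (∀ x y z : A, br (br x y) (α z) + br (br y z) (α x) + br (br z x) (α y) = 0)
      ↔ (∀ x y z : A, tr x y z + tr y z x + tr z x y = 0) :=
  stmt_12_general br tr α hakivis hflex
end

section
/- Let (A, [−,−], [−,−,−], α) be a Hom-alternative Hom-Akivis algebra (the ternary bracket is alternating). Then Σ_cyc [[x,y], α(z)] = 6·[x,y,z] for all x,y,z, where Σ_cyc denotes the cyclic sum over x,y,z. -/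
/-! A trilinear map that is alternating in its first two and in its last two arguments is
totally skew-symmetric, so each cyclic permutation of `(x, y, z)` contributes `t x y z` and each
transposition `-t x y z`; the Hom-Akivis identity then leaves `3 + 3 = 6` copies of `[x, y, z]`. -/

theorem LinearMap.cyclicSum_sub_anticyclicSum_eq_six_smul {R M N : Type*} [CommSemiring R]
    [AddCommMonoid M] [Module R M] [AddCommGroup N] [Module R N]
    (t : M →ₗ[R] M →ₗ[R] M →ₗ[R] N) (h₁₂ : t.IsAlt) (h₂₃ : ∀ x, (t x).IsAlt) (x y z : M) :
    (t x y z + t y z x + t z x y) - (t y x z + t z y x + t x z y) = (6 : ℕ) • t x y z := by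
  have swap₁₂ : ∀ a b c, t b a c = -t a b c := fun a b c => by
    rw [← h₁₂.neg a b, LinearMap.neg_apply]
  have swap₂₃ : ∀ a b c, t a c b = -t a b c := fun a b c => ((h₂₃ a).neg b c).symm
  have hyzx : t y z x = t x y z := by rw [swap₂₃ y x z, swap₁₂ x y z, neg_neg]
  have hzxy : t z x y = t x y z := by rw [swap₁₂ x z y, swap₂₃ x y z, neg_neg]
  rw [hyzx, hzxy, swap₁₂ x y z, swap₁₂ y z x, hyzx, swap₂₃ x y z]
  module

theorem stmt_13_general {K A : Type*} [Field K] [AddCommGroup A] [Module K A]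
    (br : A →ₗ[K] A →ₗ[K] A) (tr : A →ₗ[K] A →ₗ[K] A →ₗ[K] A)
    (α : A →ₗ[K] A)
    (hakivis : ∀ x y z : A,
      br (br x y) (α z) + br (br y z) (α x) + br (br z x) (α y)
        = (tr x y z + tr y z x + tr z x y) - (tr y x z + tr z y x + tr x z y))
    (halt : ∀ x y z : A, (x = y ∨ y = z ∨ x = z) → tr x y z = 0) :
    ∀ x y z : A,
      br (br x y) (α z) + br (br y z) (α x) + br (br z x) (α y)
        = (6 : ℕ) • tr x y z := by
  have h₁₂ : tr.IsAlt := fun x => LinearMap.ext fun z => halt x x z (Or.inl rfl)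
  have h₂₃ : ∀ x, (tr x).IsAlt := fun x y => halt x y y (Or.inr (Or.inl rfl))
  intro x y z
  rw [hakivis, tr.cyclicSum_sub_anticyclicSum_eq_six_smul h₁₂ h₂₃]

/-- In a Hom-alternative Hom-Akivis algebra, the cyclic sum of
[[x,y], α(z)] equals 6·[x,y,z]. -/
theorem stmt_13 {K A : Type*} [Field K] [CharZero K] [AddCommGroup A] [Module K A]
    (br : A →ₗ[K] A →ₗ[K] A) (tr : A →ₗ[K] A →ₗ[K] A →ₗ[K] A)
    (α : A →ₗ[K] A)
    (hskew : ∀ x y : A, br x y = -br y x)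
    (hakivis : ∀ x y z : A,
      br (br x y) (α z) + br (br y z) (α x) + br (br z x) (α y)
        = (tr x y z + tr y z x + tr z x y) - (tr y x z + tr z y x + tr x z y))
    (halt : ∀ x y z : A, (x = y ∨ y = z ∨ x = z) → tr x y z = 0) :
    ∀ x y z : A,
      br (br x y) (α z) + br (br y z) (α x) + br (br z x) (α y)
        = (6 : ℕ) • tr x y z :=
  stmt_13_general br tr α hakivis halt
end

section
/- Let (A, ·, α) be a multiplicative Hom-alternative algebra, i.e. the Hom-associator as(x,y,z) = (x·y)·α(z) − α(x)·(y·z) is alternating and α is an algebra endomorphism. Then the Hom-associator satisfies as(α(x), α(y), [x,z]) = [as(x,y,z), α²(x)] for all x,y,z, where [u,v] := u·v − v·u. -/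
/-!
In an alternative algebra `(x, y, x z) = (x, y, z) x` and `(x, y, z x) = x (x, y, z)`, and
subtracting the two gives `(x, y, [x, z]) = [(x, y, z), x]`. The first identity is the sum of
the two Teichmüller identities `T(y, x, x, z)` and `T(z, y, x, x)`: the associators with a
repeated argument vanish and two further pairs cancel after a cyclic rotation. The second
identity is the first one in the opposite algebra. For a multiplicative twisting map `α` the
Teichmüller identity survives with suitable `α`s inserted, and the argument goes through
verbatim.
-/

section HomAlternative

variable {K A : Type*} [CommRing K] [AddCommGroup A] [Module K A]
  (μ : A →ₗ[K] A →ₗ[K] A) (α : A →ₗ[K] A)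

def homAssoc (x y z : A) : A := μ (μ x y) (α z) - μ (α x) (μ y z)

def IsHomAlternative : Prop :=
  ∀ x y z : A, (x = y ∨ y = z ∨ x = z) → homAssoc μ α x y z = 0

variable {μ α}

lemma homAssoc_sub_right (x y z w : A) :
    homAssoc μ α x y (z - w) = homAssoc μ α x y z - homAssoc μ α x y w := by
  simp only [homAssoc, map_sub]
  abel

lemma homAssoc_flip (x y z : A) : homAssoc μ.flip α x y z = -homAssoc μ α z y x := by
  simp only [homAssoc, LinearMap.flip_apply]
  abel

lemma homAssoc_teichmuller (hmult : ∀ x y : A, α (μ x y) = μ (α x) (α y)) (a b c d : A) :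
    homAssoc μ α (μ a b) (α c) (α d) - homAssoc μ α (α a) (μ b c) (α d)
        + homAssoc μ α (α a) (α b) (μ c d)
      = μ (α (α a)) (homAssoc μ α b c d) + μ (homAssoc μ α a b c) (α (α d)) := by
  simp only [homAssoc, hmult, map_sub, LinearMap.sub_apply]
  abel

namespace IsHomAlternative

lemma flip (h : IsHomAlternative μ α) : IsHomAlternative μ.flip α := by
  intro x y z hxyz
  rw [homAssoc_flip, h z y x (by tauto), neg_zero]

lemma homAssoc_swap₁₂ (h : IsHomAlternative μ α) (x y z : A) :
    homAssoc μ α y x z = -homAssoc μ α x y z := by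
  have hsum := h (x + y) (x + y) z (Or.inl rfl)
  have hx := h x x z (Or.inl rfl)
  have hy := h y y z (Or.inl rfl)
  simp only [homAssoc, map_add, LinearMap.add_apply] at hsum hx hy ⊢
  linear_combination (norm := module) hsum - hx - hy

lemma homAssoc_swap₂₃ (h : IsHomAlternative μ α) (x y z : A) :
    homAssoc μ α x z y = -homAssoc μ α x y z := by
  have hsum := h x (y + z) (y + z) (Or.inr (Or.inl rfl))
  have hy := h x y y (Or.inr (Or.inl rfl))
  have hz := h x z z (Or.inr (Or.inl rfl))
  simp only [homAssoc, map_add, LinearMap.add_apply] at hsum hy hz ⊢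
  linear_combination (norm := module) hsum - hy - hz

lemma homAssoc_rotate (h : IsHomAlternative μ α) (x y z : A) :
    homAssoc μ α y z x = homAssoc μ α x y z := by
  rw [h.homAssoc_swap₂₃ y x z, h.homAssoc_swap₁₂, neg_neg]

lemma homAssoc_swap₁₃ (h : IsHomAlternative μ α) (x y z : A) :
    homAssoc μ α z y x = -homAssoc μ α x y z := by
  rw [h.homAssoc_rotate x z y, h.homAssoc_swap₂₃]

lemma homAssoc_map_map_mul_left (h : IsHomAlternative μ α)
    (hmult : ∀ x y : A, α (μ x y) = μ (α x) (α y)) (x y z : A) :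
    homAssoc μ α (α x) (α y) (μ x z) = μ (homAssoc μ α x y z) (α (α x)) := by
  have hT₁ := homAssoc_teichmuller hmult y x x z
  have hT₂ := homAssoc_teichmuller hmult z y x x
  simp only [h x x z (Or.inl rfl), h y x x (Or.inr (Or.inl rfl)),
    h (μ z y) (α x) (α x) (Or.inr (Or.inl rfl)), h.homAssoc_swap₁₃ x y z, map_zero,
    map_neg, LinearMap.zero_apply, LinearMap.neg_apply] at hT₁ hT₂
  linear_combination (norm := module) -(hT₁ + hT₂) + h.homAssoc_rotate (α z) (μ y x) (α x)
    - h.homAssoc_rotate (α z) (α y) (μ x x) + h.homAssoc_swap₁₂ (α x) (α y) (μ x z)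

lemma homAssoc_map_map_mul_right (h : IsHomAlternative μ α)
    (hmult : ∀ x y : A, α (μ x y) = μ (α x) (α y)) (x y z : A) :
    homAssoc μ α (α x) (α y) (μ z x) = μ (α (α x)) (homAssoc μ α x y z) := by
  have hop := h.flip.homAssoc_map_map_mul_left (fun a b => hmult b a) x y z
  rwa [homAssoc_flip, homAssoc_flip, LinearMap.flip_apply, LinearMap.flip_apply,
    h.homAssoc_swap₁₃ (α x), h.homAssoc_swap₁₃ x, neg_neg, neg_neg] at hop

end IsHomAlternative

end HomAlternative

theorem stmt_14_general {K A : Type*} [Field K] [AddCommGroup A] [Module K A]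
    (μ : A →ₗ[K] A →ₗ[K] A) (α : A →ₗ[K] A)
    (hmult : ∀ x y : A, α (μ x y) = μ (α x) (α y))
    (halt : ∀ x y z : A, (x = y ∨ y = z ∨ x = z) →
      μ (μ x y) (α z) - μ (α x) (μ y z) = 0) :
    ∀ x y z : A,
      let as : A → A → A → A := fun a b c => μ (μ a b) (α c) - μ (α a) (μ b c)
      let br : A → A → A := fun a b => μ a b - μ b a
      as (α x) (α y) (br x z) = br (as x y z) (α (α x)) := by
  have h : IsHomAlternative μ α := halt
  intro x y z as br
  change homAssoc μ α (α x) (α y) (μ x z - μ z x)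
    = μ (homAssoc μ α x y z) (α (α x)) - μ (α (α x)) (homAssoc μ α x y z)
  rw [homAssoc_sub_right, h.homAssoc_map_map_mul_left hmult, h.homAssoc_map_map_mul_right hmult]

/-- In a multiplicative Hom-alternative algebra, the Hom-associator satisfies
as(α(x), α(y), [x,z]) = [as(x,y,z), α²(x)]. -/
theorem stmt_14 {K A : Type*} [Field K] [CharZero K] [AddCommGroup A] [Module K A]
    (μ : A →ₗ[K] A →ₗ[K] A) (α : A →ₗ[K] A)
    (hmult : ∀ x y : A, α (μ x y) = μ (α x) (α y))
    (halt : ∀ x y z : A, (x = y ∨ y = z ∨ x = z) →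
      μ (μ x y) (α z) - μ (α x) (μ y z) = 0) :
    ∀ x y z : A,
      let as : A → A → A → A := fun a b c => μ (μ a b) (α c) - μ (α a) (μ b c)
      let br : A → A → A := fun a b => μ a b - μ b a
      as (α x) (α y) (br x z) = br (as x y z) (α (α x)) :=
  stmt_14_general μ α hmult halt
end
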